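/- Let $n \ge 2$, $j \ge 1$, $N \in \mathbb{N}$, and set $h = j^{-1}$. For fixed $\beta \ge 0$ there exist constants $c_1, c_2 > 0$ (independent of $j$) such that, writing $x = (x_1, x_2, \bar{x})$ with $\bar{x} \in \mathbb{R}^{n-1}$, $c_1 j^{-(n-1)/2} \le \int_{S^n} (1 - |\bar{x}|^2)^j (1 + j^{-1}|\bar{x}|^2)^{2\beta} \, d\mu(x) \le c_2 j^{-(n-1)/2}$. -/

import Mathlib

open MeasureTheory
open scoped ENNReal

/-- `|x̄|²` for `x = (x₁, x₂, x̄) ∈ ℝ^{n+1}`. -/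
def barNormSq (n : ℕ) (x : EuclideanSpace ℝ (Fin (n + 1))) : ℝ :=
  ∑ m ∈ Finset.univ.filter (fun m : Fin (n + 1) => m ≠ 0 ∧ m ≠ 1), (x m) ^ 2

/-!
Write `b = |x̄|²`. Since `(1 - b)^j ≤ e^{-j b}` and the weight `(1 + b/j)^{2β}` lies between `1`
and `2^{2β}`, the integral is comparable to the measure of `{b < 1/j}`, a tube of radius `j^{-1/2}`
around the great circle `{x̄ = 0}`, which has codimension `n - 1` in `Sⁿ`. Precisely, it suffices
that `μ {b < ρ²} ≍ ρ^{n-1}` for `ρ ≤ 1/2`: for the lower bound, `(1 - b)^j ≥ 3/4` on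
`{b < 1/(4j)}`; for the upper bound, `e^{-j b} ≤ e^{-k}` with `k = ⌊√(j b)⌋`, so the integral is
at most `2^{2β} ∑ₖ e^{-k} μ {b < (k+1)²/j}`.

The tube estimate is local. Near a point where `|x_i| ≥ δ` the sphere is the graph of
`y ↦ ±√(1 - |y|²)` over the other coordinates, which is bi-Lipschitz on `|y|² ≤ 1 - δ²`; so up to
constants the tube is a cylinder `{|y₀| ≤ 1, |ȳ| < ρ}` in `ℝⁿ`, whose measure scales exactly like
`ρ^{n-1}` under `ȳ ↦ ρ ȳ`. Finitely many such charts also show `μ(Sⁿ) < ∞`, which handles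
`ρ > 1/2`.
-/

open Metric Set Real
open scoped NNReal

local notation "𝔼" k => EuclideanSpace ℝ (Fin k)

noncomputable section

def highestWeightProfile (β : ℝ) (j : ℕ) (t : ℝ) : ℝ := (1 - t) ^ j * (1 + (j : ℝ)⁻¹ * t) ^ (2 * β)

section Profile

variable {β t : ℝ} {j : ℕ}

theorem highestWeightProfile_nonneg (ht0 : 0 ≤ t) (ht1 : t ≤ 1) : 0 ≤ highestWeightProfile β j t :=
  mul_nonneg (pow_nonneg (by linarith) j) (rpow_nonneg (by positivity) _)

theorem highestWeightProfile_le (hj : 1 ≤ j) (hβ : 0 ≤ β) (ht0 : 0 ≤ t) (ht1 : t ≤ 1) :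
    highestWeightProfile β j t ≤ 2 ^ (2 * β) * exp (-(j * t)) := by
  unfold highestWeightProfile
  have hj' : (j : ℝ)⁻¹ ≤ 1 := inv_le_one_of_one_le₀ (by exact_mod_cast hj)
  rw [mul_comm (2 ^ (2 * β) : ℝ), ← mul_neg, exp_nat_mul]
  refine mul_le_mul (pow_le_pow_left₀ (by linarith) ?_ j) (rpow_le_rpow (by positivity) ?_
    (by positivity)) (rpow_nonneg (by positivity) _) (pow_nonneg (exp_pos _).le _)
  · simpa using one_sub_le_exp_neg t
  · nlinarith [mul_le_mul hj' ht1 ht0 zero_le_one]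

theorem three_quarters_le_highestWeightProfile (hj : 1 ≤ j) (hβ : 0 ≤ β) (ht0 : 0 ≤ t)
    (hjt : j * t ≤ 1 / 4) : 3 / 4 ≤ highestWeightProfile β j t := by
  have hbern : 3 / 4 ≤ (1 - t) ^ j := by
    have := one_add_mul_le_pow (a := -t) (by nlinarith [(Nat.one_le_cast (α := ℝ)).2 hj]) j
    rw [← sub_eq_add_neg] at this
    linarith
  unfold highestWeightProfile
  simpa using mul_le_mul hbern (one_le_rpow (le_add_of_nonneg_right (by positivity))
    (by positivity)) zero_le_one (by positivity)

theorem measurable_highestWeightProfile : Measurable (highestWeightProfile β j) := by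
  unfold highestWeightProfile; fun_prop

end Profile

theorem summable_succ_pow_mul_exp_neg (d : ℕ) :
    Summable fun n : ℕ => ((n : ℝ) + 1) ^ d * exp (-n) := by
  have h := ((summable_nat_add_iff 1).2 (summable_pow_mul_exp_neg_nat_mul d one_pos)).mul_left
    (exp 1)
  refine h.congr fun n => ?_
  rw [mul_left_comm, ← exp_add]
  push_cast
  ring_nf

theorem inv_sqrt_pow_eq_rpow {x : ℝ} (hx : 0 ≤ x) (d : ℕ) : (√x)⁻¹ ^ d = x ^ (-(d : ℝ) / 2) := by
  rw [sqrt_eq_rpow, ← rpow_neg hx, ← rpow_natCast, ← rpow_mul hx]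
  ring_nf

theorem exists_lt_sq_and_exp_neg_mul_le {t s : ℝ} (ht : 0 < t) (hs : 0 ≤ s) :
    ∃ n : ℕ, s < ((n + 1) * (√t)⁻¹) ^ 2 ∧ exp (-(t * s)) ≤ exp (-n) := by
  have hts : 0 ≤ t * s := mul_nonneg ht.le hs
  refine ⟨⌊√(t * s)⌋₊, ?_, exp_le_exp.2 (neg_le_neg ?_)⟩
  · rw [mul_pow, inv_pow, sq_sqrt ht.le, ← div_eq_mul_inv, lt_div_iff₀ ht, mul_comm]
    calc t * s = √(t * s) ^ 2 := (sq_sqrt hts).symm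
      _ < _ := pow_lt_pow_left₀ (Nat.lt_floor_add_one _) (sqrt_nonneg _) two_ne_zero
  · calc (⌊√(t * s)⌋₊ : ℝ) ≤ (⌊√(t * s)⌋₊ : ℝ) ^ 2 := by
          exact_mod_cast Nat.le_self_pow two_ne_zero _
      _ ≤ √(t * s) ^ 2 := pow_le_pow_left₀ (Nat.cast_nonneg _) (Nat.floor_le (sqrt_nonneg _)) 2
      _ = t * s := sq_sqrt hts

section Sublevel

variable {X : Type*} [MeasurableSpace X] {μ : Measure X} {b : X → ℝ} {d : ℕ} {β : ℝ} {j : ℕ}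

theorem lintegral_exp_neg_mul_le (hb : Measurable b) (hb0 : ∀ x, 0 ≤ b x) {C : ℝ}
    (hC : 0 ≤ C) (hμ : ∀ ρ, 0 < ρ → μ {x | b x < ρ ^ 2} ≤ ENNReal.ofReal (C * ρ ^ d))
    {t : ℝ} (ht : 0 < t) :
    ∫⁻ x, ENNReal.ofReal (exp (-(t * b x))) ∂μ ≤
      ENNReal.ofReal (C * (∑' n : ℕ, ((n : ℝ) + 1) ^ d * exp (-n)) * (√t)⁻¹ ^ d) := by
  set A : ℕ → Set X := fun n => {x | b x < ((n + 1) * (√t)⁻¹) ^ 2}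
  have hpt (x : X) : ENNReal.ofReal (exp (-(t * b x))) ≤
      ∑' n, (A n).indicator (fun _ => ENNReal.ofReal (exp (-n))) x := by
    obtain ⟨n, hxA, hexp⟩ := exists_lt_sq_and_exp_neg_mul_le ht (hb0 x)
    refine le_trans ?_ (ENNReal.le_tsum n)
    rw [indicator_of_mem (show x ∈ A n from hxA)]
    exact ENNReal.ofReal_le_ofReal hexp
  have hA (n : ℕ) : MeasurableSet (A n) := measurableSet_lt hb measurable_const
  calc ∫⁻ x, ENNReal.ofReal (exp (-(t * b x))) ∂μ
      ≤ ∫⁻ x, ∑' n, (A n).indicator (fun _ => ENNReal.ofReal (exp (-n))) x ∂μ := lintegral_mono hpt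
    _ = ∑' n : ℕ, ENNReal.ofReal (exp (-n)) * μ (A n) := by
      rw [lintegral_tsum fun n => (measurable_const.indicator (hA n)).aemeasurable]
      simp_rw [lintegral_indicator_const (hA _)]
    _ ≤ ∑' n : ℕ, ENNReal.ofReal (C * (√t)⁻¹ ^ d * (((n : ℝ) + 1) ^ d * exp (-n))) := by
      refine ENNReal.tsum_le_tsum fun n => ?_
      calc ENNReal.ofReal (exp (-n)) * μ (A n)
          ≤ ENNReal.ofReal (exp (-n)) * ENNReal.ofReal (C * ((n + 1) * (√t)⁻¹) ^ d) := by
            gcongr; exact hμ _ (by positivity)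
        _ = _ := by rw [← ENNReal.ofReal_mul (exp_pos _).le, mul_pow]; ring_nf
    _ = _ := by
      rw [← ENNReal.ofReal_tsum_of_nonneg (fun n => by positivity)
        ((summable_succ_pow_mul_exp_neg d).mul_left _), tsum_mul_left]
      ring_nf

theorem lintegral_highestWeightProfile_le (hb : Measurable b) (hb0 : ∀ x, 0 ≤ b x)
    (hb1 : ∀ᵐ x ∂μ, b x ≤ 1) {C : ℝ} (hC : 0 ≤ C)
    (hup : ∀ ρ, 0 < ρ → μ {x | b x < ρ ^ 2} ≤ ENNReal.ofReal (C * ρ ^ d)) (hβ : 0 ≤ β)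
    (hj : 1 ≤ j) :
    ∫⁻ x, ENNReal.ofReal (highestWeightProfile β j (b x)) ∂μ ≤ ENNReal.ofReal
      (2 ^ (2 * β) * (C * (∑' n : ℕ, ((n : ℝ) + 1) ^ d * exp (-n)) * (√j)⁻¹ ^ d)) := by
  calc _ ≤ ∫⁻ x, ENNReal.ofReal (2 ^ (2 * β)) * ENNReal.ofReal (exp (-(j * b x))) ∂μ :=
        lintegral_mono_ae <| hb1.mono fun x hx => by
          rw [← ENNReal.ofReal_mul (by positivity)]
          exact ENNReal.ofReal_le_ofReal (highestWeightProfile_le hj hβ (hb0 x) hx)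
    _ = ENNReal.ofReal (2 ^ (2 * β)) * ∫⁻ x, ENNReal.ofReal (exp (-(j * b x))) ∂μ :=
        lintegral_const_mul _ (by fun_prop)
    _ ≤ _ := by
        rw [ENNReal.ofReal_mul (by positivity)]
        gcongr
        exact lintegral_exp_neg_mul_le hb hb0 hC hup (by positivity)

theorem le_lintegral_highestWeightProfile (hb : Measurable b) (hb0 : ∀ x, 0 ≤ b x) {c : ℝ}
    (hlow : ∀ ρ, 0 < ρ → ρ ≤ 1 / 2 → ENNReal.ofReal (c * ρ ^ d) ≤ μ {x | b x < ρ ^ 2})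
    (hβ : 0 ≤ β) (hj : 1 ≤ j) :
    ENNReal.ofReal (3 / 4 * (c * (2⁻¹ * (√j)⁻¹) ^ d)) ≤
      ∫⁻ x, ENNReal.ofReal (highestWeightProfile β j (b x)) ∂μ := by
  set ρ : ℝ := 2⁻¹ * (√j)⁻¹
  have hsqrt : 1 ≤ √(j : ℝ) := one_le_sqrt.2 (by exact_mod_cast hj)
  have hρ : 0 < ρ := by positivity
  have hρ2 : j * ρ ^ 2 = 1 / 4 := by
    rw [mul_pow, inv_pow, inv_pow, sq_sqrt (Nat.cast_nonneg j)]; field_simp; norm_num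
  have hf : ∀ x ∈ {x | b x < ρ ^ 2},
      ENNReal.ofReal (3 / 4) ≤ ENNReal.ofReal (highestWeightProfile β j (b x)) := fun x hx =>
    ENNReal.ofReal_le_ofReal (three_quarters_le_highestWeightProfile hj hβ (hb0 x)
      (hρ2 ▸ mul_le_mul_of_nonneg_left (le_of_lt hx) (Nat.cast_nonneg j)))
  calc ENNReal.ofReal (3 / 4 * (c * ρ ^ d))
      = ENNReal.ofReal (3 / 4) * ENNReal.ofReal (c * ρ ^ d) := ENNReal.ofReal_mul (by norm_num)
    _ ≤ ENNReal.ofReal (3 / 4) * μ {x | b x < ρ ^ 2} := by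
        gcongr
        refine hlow ρ hρ ?_
        have := inv_le_one_of_one_le₀ hsqrt
        simp only [ρ]
        linarith
    _ = ∫⁻ x in {x | b x < ρ ^ 2}, ENNReal.ofReal (3 / 4) ∂μ := (setLIntegral_const _ _).symm
    _ ≤ ∫⁻ x in {x | b x < ρ ^ 2}, ENNReal.ofReal (highestWeightProfile β j (b x)) ∂μ :=
        setLIntegral_mono (measurable_highestWeightProfile.comp hb).ennreal_ofReal hf
    _ ≤ _ := setLIntegral_le_lintegral _ _

theorem exists_integral_highestWeightProfile_bounds (hb : Measurable b) (hb0 : ∀ x, 0 ≤ b x)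
    (hb1 : ∀ᵐ x ∂μ, b x ≤ 1) {c C : ℝ} (hc : 0 < c) (hC : 0 < C)
    (hlow : ∀ ρ, 0 < ρ → ρ ≤ 1 / 2 → ENNReal.ofReal (c * ρ ^ d) ≤ μ {x | b x < ρ ^ 2})
    (hup : ∀ ρ, 0 < ρ → μ {x | b x < ρ ^ 2} ≤ ENNReal.ofReal (C * ρ ^ d)) (hβ : 0 ≤ β) :
    ∃ c₁ c₂ : ℝ, 0 < c₁ ∧ 0 < c₂ ∧ ∀ j : ℕ, 1 ≤ j →
      c₁ * (j : ℝ) ^ (-(d : ℝ) / 2) ≤ ∫ x, highestWeightProfile β j (b x) ∂μ ∧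
        ∫ x, highestWeightProfile β j (b x) ∂μ ≤ c₂ * (j : ℝ) ^ (-(d : ℝ) / 2) := by
  have hS : 0 < ∑' n : ℕ, ((n : ℝ) + 1) ^ d * exp (-n) :=
    (summable_succ_pow_mul_exp_neg d).tsum_pos (fun n => by positivity) 0 (by positivity)
  refine ⟨3 / 4 * c * 2⁻¹ ^ d, 2 ^ (2 * β) * (C * ∑' n : ℕ, ((n : ℝ) + 1) ^ d * exp (-n)),
    by positivity, by positivity, fun j hj => ?_⟩
  have hupper := lintegral_highestWeightProfile_le hb hb0 hb1 hC.le hup hβ hj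
  have hlower := le_lintegral_highestWeightProfile (μ := μ) hb hb0 hlow hβ hj
  have hpow := inv_sqrt_pow_eq_rpow (Nat.cast_nonneg j) d
  rw [integral_eq_lintegral_of_nonneg_ae
    (hb1.mono fun x hx => highestWeightProfile_nonneg (hb0 x) hx)
    (measurable_highestWeightProfile.comp hb).aestronglyMeasurable]
  constructor
  · have := (ENNReal.ofReal_le_iff_le_toReal (ne_top_of_le_ne_top ENNReal.ofReal_ne_top hupper)).1
      hlower
    rw [mul_pow, hpow] at this
    linarith
  · have := ENNReal.toReal_le_of_le_ofReal (by positivity) hupper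
    rw [hpow] at this
    linarith

end Sublevel

section Graph

theorem abs_sqrt_one_sub_sq_sub_le {a b δ : ℝ} (hδ : 0 < δ) (ha : 0 ≤ a) (hb : 0 ≤ b)
    (ha' : a ^ 2 ≤ 1 - δ ^ 2) (hb' : b ^ 2 ≤ 1 - δ ^ 2) :
    |√(1 - a ^ 2) - √(1 - b ^ 2)| ≤ |a - b| / δ := by
  have hu : δ ≤ √(1 - a ^ 2) := Real.le_sqrt_of_sq_le (by linarith)
  have hv : δ ≤ √(1 - b ^ 2) := Real.le_sqrt_of_sq_le (by linarith)
  have hu2 := Real.sq_sqrt (show 0 ≤ 1 - a ^ 2 by nlinarith)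
  have hv2 := Real.sq_sqrt (show 0 ≤ 1 - b ^ 2 by nlinarith)
  have hab : a + b ≤ 2 := by nlinarith [show a ≤ 1 by nlinarith, show b ≤ 1 by nlinarith]
  have key : |√(1 - a ^ 2) - √(1 - b ^ 2)| * (√(1 - a ^ 2) + √(1 - b ^ 2)) =
      |a - b| * (a + b) := by
    rw [← abs_of_nonneg (by linarith : 0 ≤ √(1 - a ^ 2) + √(1 - b ^ 2)),
      ← abs_of_nonneg (by linarith : 0 ≤ a + b), ← abs_mul, ← abs_mul, ← abs_neg]
    congr 1; nlinarith
  rw [le_div_iff₀ hδ]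
  nlinarith [mul_le_mul_of_nonneg_left (add_le_add hu hv)
      (abs_nonneg (√(1 - a ^ 2) - √(1 - b ^ 2))),
    mul_le_mul_of_nonneg_left hab (abs_nonneg (a - b))]

variable {k : ℕ} (i : Fin (k + 1))

def dropCoord (x : 𝔼 (k + 1)) : 𝔼 k := WithLp.toLp 2 fun j => x (i.succAbove j)

def graphOver (s : ℝ) (y : 𝔼 k) : 𝔼 (k + 1) :=
  WithLp.toLp 2 (Fin.insertNth i (s * √(1 - ‖y‖ ^ 2)) y)

theorem norm_sq_eq_sq_add_norm_dropCoord_sq (x : 𝔼 (k + 1)) :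
    ‖x‖ ^ 2 = x i ^ 2 + ‖dropCoord i x‖ ^ 2 := by
  simp only [EuclideanSpace.real_norm_sq_eq, Fin.sum_univ_succAbove _ i, dropCoord]

theorem dropCoord_sub (x x' : 𝔼 (k + 1)) :
    dropCoord i (x - x') = dropCoord i x - dropCoord i x' := rfl

theorem norm_dropCoord_le (x : 𝔼 (k + 1)) : ‖dropCoord i x‖ ≤ ‖x‖ :=
  (pow_le_pow_iff_left₀ (norm_nonneg _) (norm_nonneg _) two_ne_zero).1 <| by
    rw [norm_sq_eq_sq_add_norm_dropCoord_sq i x]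
    exact le_add_of_nonneg_left (sq_nonneg _)

theorem continuous_dropCoord : Continuous (dropCoord i) :=
  LipschitzWith.continuous (K := 1) <| LipschitzWith.of_dist_le_mul fun x x' => by
    rw [NNReal.coe_one, one_mul, dist_eq_norm, dist_eq_norm, ← dropCoord_sub]
    exact norm_dropCoord_le i _

@[simp]
theorem graphOver_apply_self (s : ℝ) (y : 𝔼 k) : graphOver i s y i = s * √(1 - ‖y‖ ^ 2) := by
  simp [graphOver]

@[simp]
theorem dropCoord_graphOver (s : ℝ) (y : 𝔼 k) : dropCoord i (graphOver i s y) = y := by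
  ext j; simp [graphOver, dropCoord]

theorem dist_graphOver_sq (s : ℝ) (y y' : 𝔼 k) :
    dist (graphOver i s y) (graphOver i s y') ^ 2 =
      (s * √(1 - ‖y‖ ^ 2) - s * √(1 - ‖y'‖ ^ 2)) ^ 2 + dist y y' ^ 2 := by
  rw [dist_eq_norm, norm_sq_eq_sq_add_norm_dropCoord_sq i, dropCoord_sub, dropCoord_graphOver,
    dropCoord_graphOver, ← dist_eq_norm, PiLp.sub_apply, graphOver_apply_self, graphOver_apply_self]

theorem antilipschitzWith_graphOver (s : ℝ) : AntilipschitzWith 1 (graphOver i s) :=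
  AntilipschitzWith.of_le_mul_dist fun y y' => by
    rw [NNReal.coe_one, one_mul, ← pow_le_pow_iff_left₀ dist_nonneg dist_nonneg two_ne_zero,
      dist_graphOver_sq]
    exact le_add_of_nonneg_left (sq_nonneg _)

theorem lipschitzOnWith_graphOver {s δ : ℝ} (hs : |s| ≤ 1) (hδ : 0 < δ) (hδ1 : δ ≤ 1) :
    LipschitzOnWith (1 + δ⁻¹).toNNReal (graphOver i s) (closedBall 0 √(1 - δ ^ 2)) := by
  refine LipschitzOnWith.of_dist_le' fun y hy y' hy' => ?_
  have hball {z : 𝔼 k} (hz : z ∈ closedBall 0 √(1 - δ ^ 2)) : ‖z‖ ^ 2 ≤ 1 - δ ^ 2 := by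
    rw [mem_closedBall_zero_iff] at hz
    exact (Real.le_sqrt (norm_nonneg z) (by nlinarith)).1 hz
  have hsqrt : |s * √(1 - ‖y‖ ^ 2) - s * √(1 - ‖y'‖ ^ 2)| ≤ δ⁻¹ * dist y y' := by
    rw [← mul_sub, abs_mul]
    calc |s| * |√(1 - ‖y‖ ^ 2) - √(1 - ‖y'‖ ^ 2)| ≤ 1 * (|‖y‖ - ‖y'‖| / δ) :=
          mul_le_mul hs (abs_sqrt_one_sub_sq_sub_le hδ (norm_nonneg y) (norm_nonneg y')
            (hball hy) (hball hy')) (abs_nonneg _) zero_le_one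
      _ ≤ δ⁻¹ * dist y y' := by
        rw [one_mul, div_eq_inv_mul]
        exact mul_le_mul_of_nonneg_left (abs_norm_sub_norm_le y y') (inv_nonneg.2 hδ.le)
  rw [← pow_le_pow_iff_left₀ dist_nonneg (by positivity) two_ne_zero, dist_graphOver_sq]
  nlinarith [sq_abs (s * √(1 - ‖y‖ ^ 2) - s * √(1 - ‖y'‖ ^ 2)),
    pow_le_pow_left₀ (abs_nonneg _) hsqrt 2, dist_nonneg (x := y) (y := y'),
    inv_nonneg.2 hδ.le]

theorem graphOver_mem_sphere {s : ℝ} (hs : |s| = 1) {y : 𝔼 k} (hy : ‖y‖ ≤ 1) :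
    graphOver i s y ∈ sphere 0 1 := by
  have h : 0 ≤ 1 - ‖y‖ ^ 2 := by nlinarith [norm_nonneg y]
  rw [mem_sphere_zero_iff_norm, ← pow_left_inj₀ (norm_nonneg _) zero_le_one two_ne_zero,
    norm_sq_eq_sq_add_norm_dropCoord_sq i, dropCoord_graphOver, graphOver_apply_self, mul_pow,
    Real.sq_sqrt h, ← sq_abs s, hs]
  ring

theorem graphOver_dropCoord {s : ℝ} (hs : |s| = 1) {x : 𝔼 (k + 1)} (hx : x ∈ sphere 0 1)
    (hsx : 0 ≤ s * x i) : graphOver i s (dropCoord i x) = x := by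
  have hnorm := norm_sq_eq_sq_add_norm_dropCoord_sq i x
  rw [mem_sphere_zero_iff_norm.1 hx, one_pow] at hnorm
  ext j
  rcases Fin.eq_self_or_eq_succAbove i j with rfl | ⟨j, rfl⟩
  · rw [graphOver_apply_self, show 1 - ‖dropCoord j x‖ ^ 2 = x j ^ 2 by linarith,
      Real.sqrt_sq_eq_abs]
    have habs := abs_of_nonneg hsx
    rw [abs_mul, hs, one_mul] at habs
    rw [habs, ← mul_assoc, ← abs_mul_abs_self, hs, one_mul, one_mul]
  · simp [graphOver, dropCoord]

instance isAddHaarMeasure_hausdorffMeasure_euclideanSpace :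
    (μH[(k : ℝ)] : Measure (𝔼 k)).IsAddHaarMeasure := by
  simpa only [finrank_euclideanSpace_fin] using
    isAddHaarMeasure_hausdorffMeasure (E := 𝔼 k)

def sphereCap (δ : ℝ) (T : Set (𝔼 k)) : Set (𝔼 (k + 1)) :=
  {x | x ∈ sphere 0 1 ∧ δ ≤ |x i| ∧ dropCoord i x ∈ T}

theorem hausdorffMeasure_sphereCap_le {δ : ℝ} (hδ : 0 < δ) (hδ1 : δ ≤ 1) (T : Set (𝔼 k)) :
    μH[k] (sphereCap i δ T) ≤ 2 * ((1 + δ⁻¹).toNNReal : ℝ≥0∞) ^ (k : ℝ) * μH[k] T := by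
  have hpiece {s : ℝ} (hs : |s| = 1) :
      μH[k] {x : 𝔼 (k + 1) | x ∈ sphere 0 1 ∧ δ ≤ s * x i ∧ dropCoord i x ∈ T} ≤
        ((1 + δ⁻¹).toNNReal : ℝ≥0∞) ^ (k : ℝ) * μH[k] T := by
    have hsub : {x : 𝔼 (k + 1) | x ∈ sphere 0 1 ∧ δ ≤ s * x i ∧ dropCoord i x ∈ T} ⊆
        graphOver i s '' (closedBall 0 √(1 - δ ^ 2) ∩ T) := by
      rintro x ⟨hx, hδx, hT⟩
      refine ⟨dropCoord i x, ⟨?_, hT⟩, graphOver_dropCoord i hs hx (hδ.le.trans hδx)⟩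
      have hnorm := norm_sq_eq_sq_add_norm_dropCoord_sq i x
      rw [mem_sphere_zero_iff_norm.1 hx, one_pow] at hnorm
      have hδx2 : δ ^ 2 ≤ x i ^ 2 := by
        rw [← sq_abs (x i), ← one_mul |x i|, ← hs, ← abs_mul, sq_abs]
        exact pow_le_pow_left₀ hδ.le hδx 2
      rw [mem_closedBall_zero_iff]
      exact Real.le_sqrt_of_sq_le (by linarith)
    calc _ ≤ μH[k] (graphOver i s '' (closedBall 0 √(1 - δ ^ 2) ∩ T)) := measure_mono hsub
      _ ≤ ((1 + δ⁻¹).toNNReal : ℝ≥0∞) ^ (k : ℝ) * μH[k] (closedBall 0 √(1 - δ ^ 2) ∩ T) :=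
        ((lipschitzOnWith_graphOver i hs.le hδ hδ1).mono
          inter_subset_left).hausdorffMeasure_image_le (Nat.cast_nonneg k)
      _ ≤ _ := by gcongr; exact inter_subset_right
  calc _ ≤ μH[k] ({x : 𝔼 (k + 1) | x ∈ sphere 0 1 ∧ δ ≤ 1 * x i ∧ dropCoord i x ∈ T} ∪
        {x | x ∈ sphere 0 1 ∧ δ ≤ -1 * x i ∧ dropCoord i x ∈ T}) := by
        refine measure_mono fun x ⟨hx, hδx, hT⟩ => ?_
        rcases le_abs.1 hδx with h | h
        · exact Or.inl ⟨hx, by rwa [one_mul], hT⟩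
        · exact Or.inr ⟨hx, by rwa [neg_one_mul], hT⟩
    _ ≤ _ := (measure_union_le _ _).trans (add_le_add (hpiece abs_one) (hpiece (by simp)))
    _ = _ := by rw [mul_assoc, two_mul]

theorem hausdorffMeasure_sphere_lt_top : μH[k] (sphere (0 : 𝔼 (k + 1)) 1) < ∞ := by
  have hk : (0 : ℝ) < k + 1 := by positivity
  set δ := √((k + 1 : ℝ)⁻¹)
  have hδ : 0 < δ := Real.sqrt_pos.2 (inv_pos.2 hk)
  have hδ1 : δ ≤ 1 :=
    Real.sqrt_le_one.2 (inv_le_one_of_one_le₀ (by linarith [k.cast_nonneg (α := ℝ)]))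
  have hcover : sphere (0 : 𝔼 (k + 1)) 1 ⊆
      ⋃ i, sphereCap i δ (closedBall 0 1) := by
    intro x hx
    have hsum : ∑ _i : Fin (k + 1), (k + 1 : ℝ)⁻¹ ≤ ∑ i, x i ^ 2 := by
      rw [← EuclideanSpace.real_norm_sq_eq, mem_sphere_zero_iff_norm.1 hx]
      simp [field]
    obtain ⟨i, -, hi⟩ := Finset.exists_le_of_sum_le Finset.univ_nonempty hsum
    have hnorm := norm_sq_eq_sq_add_norm_dropCoord_sq i x
    rw [mem_sphere_zero_iff_norm.1 hx, one_pow] at hnorm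
    refine mem_iUnion.2 ⟨i, hx, Real.sqrt_le_left (abs_nonneg _) |>.2 (by rwa [sq_abs]), ?_⟩
    rw [mem_closedBall_zero_iff]
    nlinarith [norm_nonneg (dropCoord i x), sq_nonneg (x i)]
  refine (measure_mono hcover).trans_lt <| (measure_iUnion_fintype_le _ _).trans_lt <|
    ENNReal.sum_lt_top.2 fun i _ => (hausdorffMeasure_sphereCap_le i hδ hδ1 _).trans_lt ?_
  exact ENNReal.mul_lt_top (ENNReal.mul_lt_top (by norm_num)
    (ENNReal.rpow_lt_top_of_nonneg (Nat.cast_nonneg k) ENNReal.coe_ne_top))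
    (isCompact_closedBall _ _).measure_lt_top

end Graph

section Cylinder

variable {k : ℕ}

def axialCylinder (I : Set ℝ) (ρ : ℝ) : Set (𝔼 (k + 1)) := {y | y 0 ∈ I ∧ ‖dropCoord 0 y‖ < ρ}

theorem addHaar_axialCylinder (μ : Measure (𝔼 (k + 1))) [μ.IsAddHaarMeasure] (I : Set ℝ) {ρ : ℝ}
    (hρ : 0 < ρ) : μ (axialCylinder I ρ) = ENNReal.ofReal (ρ ^ k) * μ (axialCylinder I 1) := by
  set d : Fin (k + 1) → ℝ := Fin.cons 1 fun _ => ρ⁻¹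
  set L := Matrix.toLpLin 2 2 (Matrix.diagonal d)
  have hdet : LinearMap.det L = (ρ ^ k)⁻¹ := by
    simp [L, Matrix.toLpLin_eq_toLin, LinearMap.det_toLin, Matrix.det_diagonal, Fin.prod_cons, d]
  have hL (y : 𝔼 (k + 1)) (j : Fin (k + 1)) : L y j = d j * y j := by
    simp [L, Matrix.toLpLin_apply, Matrix.mulVec_diagonal]
  have hpre : L ⁻¹' axialCylinder I 1 = axialCylinder I ρ := by
    ext y
    have hdrop : dropCoord 0 (L y) = ρ⁻¹ • dropCoord 0 y := by
      ext j; simp [dropCoord, hL, d]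
    simp [axialCylinder, hdrop, norm_smul, hL, d, abs_of_pos hρ, inv_mul_lt_iff₀ hρ]
  rw [← hpre, Measure.addHaar_preimage_linearMap μ (by simp [hdet, hρ.ne']), hdet, inv_inv,
    abs_of_pos (by positivity)]

theorem axialCylinder_subset_closedBall {I : Set ℝ} (hI : I ⊆ Icc (-1) 1) :
    (axialCylinder I 1 : Set (𝔼 (k + 1))) ⊆ closedBall 0 2 := by
  rintro y ⟨hy0, hy⟩
  have hnorm := norm_sq_eq_sq_add_norm_dropCoord_sq 0 y
  have := abs_le.2 (hI hy0)
  rw [mem_closedBall_zero_iff, ← pow_le_pow_iff_left₀ (norm_nonneg _) zero_le_two two_ne_zero]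
  nlinarith [sq_abs (y 0), abs_nonneg (y 0), norm_nonneg (dropCoord 0 y)]

theorem measure_axialCylinder_lt_top (μ : Measure (𝔼 (k + 1))) [IsFiniteMeasureOnCompacts μ]
    {I : Set ℝ} (hI : I ⊆ Icc (-1) 1) : μ (axialCylinder I 1) < ∞ :=
  (measure_mono (axialCylinder_subset_closedBall hI)).trans_lt measure_closedBall_lt_top

theorem measure_axialCylinder_Ioo_pos (μ : Measure (𝔼 (k + 1))) [μ.IsOpenPosMeasure] :
    0 < μ (axialCylinder (Ioo 0 (1 / 2)) 1) := by
  refine IsOpen.measure_pos μ ((isOpen_Ioo.preimage (by fun_prop)).inter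
    (isOpen_lt ((continuous_dropCoord 0).norm) continuous_const))
    ⟨EuclideanSpace.single 0 (1 / 4), ?_⟩
  exact ⟨by norm_num, (norm_dropCoord_le 0 _).trans_lt (by norm_num)⟩

end Cylinder

section Equator

theorem barNormSq_eq_norm_dropCoord_sq {m : ℕ} {i : Fin (m + 3)} (hi : i = 0 ∨ i = 1)
    (x : 𝔼 (m + 3)) : barNormSq (m + 2) x = ‖dropCoord 0 (dropCoord i x)‖ ^ 2 := by
  have h : ∀ j : Fin (m + 1), i.succAbove j.succ = j.succ.succ := by
    rcases hi with rfl | rfl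
    · simp
    · intro j; exact Fin.succ_succAbove_succ 0 j
  rw [barNormSq, Finset.sum_filter, Fin.sum_univ_succ, Fin.sum_univ_succ,
    EuclideanSpace.real_norm_sq_eq]
  simp only [dropCoord, Fin.succAbove_zero, h]
  have h1 (j : Fin (m + 1)) : j.succ.succ ≠ 1 := fun hj =>
    Fin.succ_ne_zero j (Fin.succ_injective _ (hj.trans Fin.succ_zero_eq_one.symm))
  simp [Fin.succ_ne_zero, h1]

theorem barNormSq_nonneg (n : ℕ) (x : EuclideanSpace ℝ (Fin (n + 1))) : 0 ≤ barNormSq n x :=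
  Finset.sum_nonneg fun _ _ => sq_nonneg _

theorem measurable_barNormSq (n : ℕ) : Measurable (barNormSq n) := by
  unfold barNormSq; fun_prop

variable (m : ℕ)

-- `Sⁿ ⊆ ℝⁿ⁺¹` with `n = m + 2`, so that `x̄ ∈ ℝ^{m+1}`
def equatorNbhd (ρ : ℝ) : Set (𝔼 (m + 3)) := {x | barNormSq (m + 2) x < ρ ^ 2} ∩ sphere 0 1

theorem barNormSq_le_one {x : 𝔼 (m + 3)} (hx : x ∈ sphere 0 1) : barNormSq (m + 2) x ≤ 1 := by
  rw [barNormSq_eq_norm_dropCoord_sq (Or.inl rfl)]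
  refine pow_le_one₀ (norm_nonneg _) ?_
  calc _ ≤ ‖dropCoord 0 x‖ := norm_dropCoord_le 0 _
    _ ≤ ‖x‖ := norm_dropCoord_le 0 x
    _ = 1 := mem_sphere_zero_iff_norm.1 hx

theorem exists_le_hausdorffMeasure_equatorNbhd :
    ∃ c : ℝ, 0 < c ∧ ∀ ρ, 0 < ρ → ρ ≤ 1 / 2 →
      ENNReal.ofReal (c * ρ ^ (m + 1)) ≤ μH[((m + 2 : ℕ) : ℝ)] (equatorNbhd m ρ) := by
  set T : Set (𝔼 (m + 2)) := axialCylinder (Ioo 0 (1 / 2)) 1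
  have hT : μH[((m + 2 : ℕ) : ℝ)] T ≠ ∞ :=
    (measure_axialCylinder_lt_top _ (Ioo_subset_Icc_self.trans (Icc_subset_Icc (by norm_num)
      (by norm_num)))).ne
  refine ⟨(μH[((m + 2 : ℕ) : ℝ)] T).toReal,
    ENNReal.toReal_pos (measure_axialCylinder_Ioo_pos _).ne' hT, fun ρ hρ hρ2 => ?_⟩
  have himage : graphOver 0 1 '' axialCylinder (Ioo 0 (1 / 2)) ρ ⊆ equatorNbhd m ρ := by
    rintro _ ⟨y, ⟨⟨hy0, hy0'⟩, hy⟩, rfl⟩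
    have hnorm := norm_sq_eq_sq_add_norm_dropCoord_sq 0 y
    refine ⟨?_, graphOver_mem_sphere 0 abs_one ?_⟩
    · rw [mem_ofPred_eq, barNormSq_eq_norm_dropCoord_sq (Or.inl rfl), dropCoord_graphOver]
      exact pow_lt_pow_left₀ hy (norm_nonneg _) two_ne_zero
    · rw [← pow_le_pow_iff_left₀ (norm_nonneg _) zero_le_one two_ne_zero]
      nlinarith [norm_nonneg (dropCoord 0 y)]
  calc ENNReal.ofReal ((μH[((m + 2 : ℕ) : ℝ)] T).toReal * ρ ^ (m + 1))
      = μH[((m + 2 : ℕ) : ℝ)] (axialCylinder (Ioo 0 (1 / 2)) ρ) := by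
        rw [addHaar_axialCylinder (μH[((m + 2 : ℕ) : ℝ)] : Measure (𝔼 (m + 2))) _ hρ, mul_comm,
          ENNReal.ofReal_mul (by positivity), ENNReal.ofReal_toReal hT]
    _ ≤ (1 : ℝ≥0∞) ^ ((m + 2 : ℕ) : ℝ) *
          μH[((m + 2 : ℕ) : ℝ)] (graphOver 0 1 '' axialCylinder (Ioo 0 (1 / 2)) ρ) :=
        (antilipschitzWith_graphOver 0 1).le_hausdorffMeasure_image (Nat.cast_nonneg _) _
    _ ≤ μH[((m + 2 : ℕ) : ℝ)] (equatorNbhd m ρ) := by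
        rw [ENNReal.one_rpow, one_mul]
        exact measure_mono himage

theorem equatorNbhd_subset_sphereCap {ρ : ℝ} (hρ : 0 < ρ) (hρ2 : ρ ≤ 1 / 2) :
    equatorNbhd m ρ ⊆ sphereCap 0 (1 / 2) (axialCylinder (Icc (-1) 1) ρ) ∪
      sphereCap 1 (1 / 2) (axialCylinder (Icc (-1) 1) ρ) := by
  rintro x ⟨hb, hx⟩
  have hx1 := mem_sphere_zero_iff_norm.1 hx
  have hcap (i : Fin (m + 3)) (hi : i = 0 ∨ i = 1) (hxi : 1 / 4 ≤ x i ^ 2) :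
      x ∈ sphereCap i (1 / 2) (axialCylinder (Icc (-1) 1) ρ) := by
    refine ⟨hx, (pow_le_pow_iff_left₀ (by norm_num) (abs_nonneg _) two_ne_zero).1
      (by rw [sq_abs]; linarith), abs_le.1 ?_, ?_⟩
    · calc |dropCoord i x 0| ≤ ‖dropCoord i x‖ :=
          (Real.norm_eq_abs _).symm.trans_le (PiLp.norm_apply_le (dropCoord i x) 0)
        _ ≤ ‖x‖ := norm_dropCoord_le i x
        _ = 1 := hx1
    · rw [← pow_lt_pow_iff_left₀ (norm_nonneg _) hρ.le two_ne_zero,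
        ← barNormSq_eq_norm_dropCoord_sq hi]
      exact hb
  have hnorm := norm_sq_eq_sq_add_norm_dropCoord_sq 0 x
  rw [norm_sq_eq_sq_add_norm_dropCoord_sq 0 (dropCoord 0 x),
    ← barNormSq_eq_norm_dropCoord_sq (Or.inl rfl), hx1,
    show dropCoord 0 x 0 = x 1 by simp [dropCoord]] at hnorm
  have hb4 : barNormSq (m + 2) x < 1 / 4 := hb.trans_le (by nlinarith)
  by_cases h0 : 1 / 4 ≤ x 0 ^ 2
  · exact Or.inl (hcap 0 (Or.inl rfl) h0)
  · exact Or.inr (hcap 1 (Or.inr rfl) (by linarith))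

theorem exists_hausdorffMeasure_equatorNbhd_le_of_le_half :
    ∃ C : ℝ≥0∞, C ≠ ∞ ∧ ∀ ρ, 0 < ρ → ρ ≤ 1 / 2 →
      μH[((m + 2 : ℕ) : ℝ)] (equatorNbhd m ρ) ≤ C * ENNReal.ofReal (ρ ^ (m + 1)) := by
  set K : ℝ≥0∞ := 2 * ((1 + (1 / 2 : ℝ)⁻¹).toNNReal : ℝ≥0∞) ^ ((m + 2 : ℕ) : ℝ)
  set V := μH[((m + 2 : ℕ) : ℝ)] (axialCylinder (Icc (-1) 1) 1 : Set (𝔼 (m + 2)))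
  have hK : K ≠ ∞ := ENNReal.mul_ne_top (by norm_num)
    (ENNReal.rpow_ne_top_of_nonneg (Nat.cast_nonneg _) ENNReal.coe_ne_top)
  refine ⟨2 * K * V, ENNReal.mul_ne_top (ENNReal.mul_ne_top (by norm_num) hK)
    (measure_axialCylinder_lt_top _ subset_rfl).ne, fun ρ hρ hρ2 => ?_⟩
  have hcover := equatorNbhd_subset_sphereCap m hρ hρ2
  calc μH[((m + 2 : ℕ) : ℝ)] (equatorNbhd m ρ)
      ≤ μH[((m + 2 : ℕ) : ℝ)] (sphereCap 0 (1 / 2) (axialCylinder (Icc (-1) 1) ρ)) +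
          μH[((m + 2 : ℕ) : ℝ)] (sphereCap 1 (1 / 2) (axialCylinder (Icc (-1) 1) ρ)) :=
        (measure_mono hcover).trans (measure_union_le _ _)
    _ ≤ K * μH[((m + 2 : ℕ) : ℝ)] (axialCylinder (Icc (-1) 1) ρ : Set (𝔼 (m + 2))) +
          K * μH[((m + 2 : ℕ) : ℝ)] (axialCylinder (Icc (-1) 1) ρ : Set (𝔼 (m + 2))) :=
        add_le_add (hausdorffMeasure_sphereCap_le 0 (by norm_num) (by norm_num) _)
          (hausdorffMeasure_sphereCap_le 1 (by norm_num) (by norm_num) _)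
    _ = 2 * K * V * ENNReal.ofReal (ρ ^ (m + 1)) := by
        rw [addHaar_axialCylinder (μH[((m + 2 : ℕ) : ℝ)] : Measure (𝔼 (m + 2))) _ hρ]; ring

theorem exists_hausdorffMeasure_equatorNbhd_le :
    ∃ C : ℝ, 0 < C ∧ ∀ ρ, 0 < ρ →
      μH[((m + 2 : ℕ) : ℝ)] (equatorNbhd m ρ) ≤ ENNReal.ofReal (C * ρ ^ (m + 1)) := by
  obtain ⟨C, hC, hsmall⟩ := exists_hausdorffMeasure_equatorNbhd_le_of_le_half m
  set M := μH[((m + 2 : ℕ) : ℝ)] (sphere (0 : 𝔼 (m + 3)) 1)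
  have hM : M ≠ ∞ := (hausdorffMeasure_sphere_lt_top (k := m + 2)).ne
  refine ⟨C.toReal + 2 ^ (m + 1) * M.toReal + 1, by positivity, fun ρ hρ => ?_⟩
  rcases le_or_gt ρ (1 / 2) with hρ2 | hρ2
  · calc _ ≤ C * ENNReal.ofReal (ρ ^ (m + 1)) := hsmall ρ hρ hρ2
      _ = ENNReal.ofReal (C.toReal * ρ ^ (m + 1)) := by
        rw [ENNReal.ofReal_mul ENNReal.toReal_nonneg, ENNReal.ofReal_toReal hC]
      _ ≤ _ := by
        gcongr
        linarith [show 0 ≤ 2 ^ (m + 1) * M.toReal by positivity]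
  · have h1 : 1 ≤ 2 ^ (m + 1) * ρ ^ (m + 1) := by
      rw [← mul_pow]; exact one_le_pow₀ (by linarith)
    calc _ ≤ M := measure_mono inter_subset_right
      _ = ENNReal.ofReal M.toReal := (ENNReal.ofReal_toReal hM).symm
      _ ≤ _ := by
        gcongr
        nlinarith [ENNReal.toReal_nonneg (a := M), ENNReal.toReal_nonneg (a := C),
          pow_pos hρ (m + 1)]

end Equator

end

/-- Weighted `L²` normalisation of the highest weight harmonic (base case of the
inductive construction): with `h = j⁻¹`,
`∫_{Sⁿ} (1-|x̄|²)^j (1 + j⁻¹|x̄|²)^{2β} dμ ≍ j^{-(n-1)/2}` uniformly in `j ≥ 1`,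
where `μ` is the `n`-dimensional Hausdorff (surface) measure on `Sⁿ`. -/
theorem highestWeight_weighted_l2_normalisation (n : ℕ) (hn : 2 ≤ n)
    (β : ℝ) (hβ : 0 ≤ β) :
    ∃ c₁ c₂ : ℝ, 0 < c₁ ∧ 0 < c₂ ∧
      ∀ j : ℕ, 1 ≤ j →
        c₁ * (j : ℝ) ^ (-((n : ℝ) - 1) / 2) ≤
            (∫ x in Metric.sphere (0 : EuclideanSpace ℝ (Fin (n + 1))) 1,
              (1 - barNormSq n x) ^ j *
                (1 + (j : ℝ)⁻¹ * barNormSq n x) ^ (2 * β) ∂(μH[(n : ℝ)])) ∧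
          (∫ x in Metric.sphere (0 : EuclideanSpace ℝ (Fin (n + 1))) 1,
              (1 - barNormSq n x) ^ j *
                (1 + (j : ℝ)⁻¹ * barNormSq n x) ^ (2 * β) ∂(μH[(n : ℝ)])) ≤
            c₂ * (j : ℝ) ^ (-((n : ℝ) - 1) / 2) := by
  obtain ⟨m, rfl⟩ : ∃ m, n = m + 2 := ⟨n - 2, by omega⟩
  have hrestrict (ρ : ℝ) : (μH[((m + 2 : ℕ) : ℝ)].restrict (sphere 0 1))
      {x | barNormSq (m + 2) x < ρ ^ 2} = μH[((m + 2 : ℕ) : ℝ)] (equatorNbhd m ρ) :=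
    Measure.restrict_apply (measurableSet_lt (measurable_barNormSq _) measurable_const)
  obtain ⟨c, hc, hlow⟩ := exists_le_hausdorffMeasure_equatorNbhd m
  obtain ⟨C, hC, hup⟩ := exists_hausdorffMeasure_equatorNbhd_le m
  have hexp : -(((m + 2 : ℕ) : ℝ) - 1) / 2 = -((m + 1 : ℕ) : ℝ) / 2 := by push_cast; ring
  rw [hexp]
  exact exists_integral_highestWeightProfile_bounds (measurable_barNormSq _) (barNormSq_nonneg _)
    (ae_restrict_of_forall_mem isClosed_sphere.measurableSet fun x hx => barNormSq_le_one m hx)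
    hc hC (fun ρ hρ hρ2 => hrestrict ρ ▸ hlow ρ hρ hρ2) (fun ρ hρ => hrestrict ρ ▸ hup ρ hρ) hβ
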